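/- Let θ₁, θ₂, θ₃ ∈ [0, 2π) be pairwise distinct. Then the three ring-light vectors v_j = (cos θ_j, sin θ_j, 1) ∈ ℝ³, j = 1, 2, 3, are linearly independent. In particular any three distinct lights on a latitude ring span ℝ³ (are non-coplanar through the origin). -/

import Mathlib

/-- The (unnormalized) ring-light vector at azimuth `θ`: `(cos θ, sin θ, 1)`. -/
noncomputable def ringVec (θ : ℝ) : EuclideanSpace ℝ (Fin 3) :=
  (EuclideanSpace.equiv (Fin 3) ℝ).symm ![Real.cos θ, Real.sin θ, 1]

lemma sin_sum_identity (x y : ℝ) :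
    Real.sin (2*x) + Real.sin (2*y) - Real.sin (2*x + 2*y)
      = 4 * Real.sin x * Real.sin y * Real.sin (x + y) := by
  have hx := Real.sin_sq_add_cos_sq x
  have hy := Real.sin_sq_add_cos_sq y
  simp only [two_mul, ← add_assoc, Real.sin_add, Real.cos_add]
  linear_combination (-2 * Real.sin x * Real.cos x) * hy
    + (-2 * Real.sin y * Real.cos y) * hx

lemma sin_half_ne_zero {a b : ℝ} (ha : a ∈ Set.Ico 0 (2 * Real.pi))
    (hb : b ∈ Set.Ico 0 (2 * Real.pi)) (hab : a ≠ b) :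
    Real.sin ((b - a) / 2) ≠ 0 := by
  have hpi := Real.pi_pos
  intro h
  rw [Real.sin_eq_zero_iff_of_lt_of_lt (by obtain ⟨h1,h2⟩ := ha; obtain ⟨h3,h4⟩ := hb; linarith)
    (by obtain ⟨h1,h2⟩ := ha; obtain ⟨h3,h4⟩ := hb; linarith)] at h
  apply hab
  linarith [h]

/-- For pairwise distinct azimuths `θ₁, θ₂, θ₃ ∈ [0, 2π)`, the three
ring-light vectors `(cos θⱼ, sin θⱼ, 1)` are linearly independent: any three distinct
lights on a latitude ring span `ℝ³`. -/
theorem three_distinct_ring_lights_linearIndependent (θ₁ θ₂ θ₃ : ℝ)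
    (h₁ : θ₁ ∈ Set.Ico 0 (2 * Real.pi)) (h₂ : θ₂ ∈ Set.Ico 0 (2 * Real.pi))
    (h₃ : θ₃ ∈ Set.Ico 0 (2 * Real.pi))
    (h₁₂ : θ₁ ≠ θ₂) (h₁₃ : θ₁ ≠ θ₃) (h₂₃ : θ₂ ≠ θ₃) :
    LinearIndependent ℝ ![ringVec θ₁, ringVec θ₂, ringVec θ₃] := by
  set M : Matrix (Fin 3) (Fin 3) ℝ :=
    !![Real.cos θ₁, Real.sin θ₁, 1; Real.cos θ₂, Real.sin θ₂, 1;
       Real.cos θ₃, Real.sin θ₃, 1] with hM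
  have hdetval : M.det = 4 * Real.sin ((θ₂ - θ₁)/2) * Real.sin ((θ₃ - θ₂)/2)
      * Real.sin ((θ₂ - θ₁)/2 + (θ₃ - θ₂)/2) := by
    have key := sin_sum_identity ((θ₂ - θ₁)/2) ((θ₃ - θ₂)/2)
    have e1 : 2 * ((θ₂ - θ₁)/2) = θ₂ - θ₁ := by ring
    have e2 : 2 * ((θ₃ - θ₂)/2) = θ₃ - θ₂ := by ring
    have e3 : θ₂ - θ₁ + (θ₃ - θ₂) = θ₃ - θ₁ := by ring
    rw [e1, e2, e3, Real.sin_sub, Real.sin_sub, Real.sin_sub] at key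
    simp only [hM, Matrix.det_fin_three, Matrix.cons_val', Matrix.cons_val_zero,
      Matrix.cons_val_one, Matrix.head_cons, Matrix.cons_val_fin_one, Matrix.empty_val',
      Matrix.cons_val_two, Matrix.tail_cons, Matrix.head_fin_const, Matrix.of_apply]
    linear_combination key
  have hdet : M.det ≠ 0 := by
    rw [hdetval]
    have n1 := sin_half_ne_zero h₁ h₂ h₁₂
    have n2 := sin_half_ne_zero h₂ h₃ h₂₃
    have n3 := sin_half_ne_zero h₁ h₃ h₁₃
    have e : (θ₂ - θ₁)/2 + (θ₃ - θ₂)/2 = (θ₃ - θ₁)/2 := by ring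
    rw [e]
    positivity
  have hU : IsUnit M := (Matrix.isUnit_iff_isUnit_det M).2 (isUnit_iff_ne_zero.2 hdet)
  have hli : LinearIndependent ℝ (fun i => M i) :=
    Matrix.linearIndependent_rows_iff_isUnit.2 hU
  have hmap := hli.map' ((EuclideanSpace.equiv (Fin 3) ℝ).symm.toLinearEquiv).toLinearMap
    ((EuclideanSpace.equiv (Fin 3) ℝ).symm.toLinearEquiv).ker
  convert hmap using 1
  · funext i
    fin_cases i <;> rfl
  · rfl
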